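/- arXiv:2208.09294 — 3 statements merged into one kernel-verified Lean document; each statement's English description precedes it below -/
import Mathlib

section
/- Let A be a finite alphabet and P a Borel probability measure on A^ℕ, and equip A^ℕ with the symbolic metric d(x,y) = exp(−inf{i ≥ 0 : x_i ≠ y_i}) (with d(x,y) = 0 if x = y). Fix q > 1 and assume that the Rényi entropy H_q of P exists. Then the generalized dimension of order q of P with respect to d exists and equals H_q, i.e. lim_{r→0} log(∫_{A^ℕ} P(B(y,r))^{q−1} dP(y))/((q−1) log r) = H_q, where B(y,r) is the open ball of radius r centered at y. -/
/-! For `0 < r ≤ 1` the symbolic ball `B(y, r)` is exactly the cylinder of length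
`n(r) = ⌊-log r⌋ + 1` through `y`. Hence `∫ P(B(y, r))^(q-1) dP(y) = Σ_{|w| = n(r)} P(C_w)^q`,
and since `n(r) / (-log r) → 1` as `r → 0`, the quotient defining `D_q` at scale `r` is asymptotic
to the Rényi quotient at length `n(r)`. -/

open MeasureTheory Filter Set Topology

namespace Stmt8

open scoped Classical

/-- The cylinder set of length `k` determined by a word `w`. -/
def cyl {A : Type*} {k : ℕ} (w : Fin k → A) : Set (ℕ → A) :=
  {x | ∀ i : Fin k, x (i : ℕ) = w i}

/-- The symbolic distance `d(x,y) = exp(-inf{i ≥ 0 : x_i ≠ y_i})`, with `d(x,y) = 0` if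
`x = y`. -/
noncomputable def sdist {A : Type*} (x y : ℕ → A) : ℝ :=
  if x = y then 0 else Real.exp (-(sInf {i : ℕ | x i ≠ y i} : ℕ))

/-- The open ball of radius `r` centered at `y` for the symbolic distance. -/
def sball {A : Type*} (y : ℕ → A) (r : ℝ) : Set (ℕ → A) := {x | sdist x y < r}

lemma measurableSet_cyl {A : Type*} [MeasurableSpace A] [MeasurableSingletonClass A]
    {k : ℕ} (w : Fin k → A) : MeasurableSet (cyl w) := by
  have h : cyl w = ⋂ i : Fin k, (fun x : ℕ → A => x i) ⁻¹' {w i} := by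
    ext x; simp [cyl]
  exact h ▸ MeasurableSet.iInter fun i => measurable_pi_apply _ (measurableSet_singleton _)

noncomputable def ballDepth (r : ℝ) : ℕ := ⌊-Real.log r⌋₊ + 1

lemma exp_neg_natCast_lt_iff_ballDepth_le {r : ℝ} (h0 : 0 < r) (h1 : r ≤ 1) (N : ℕ) :
    Real.exp (-N) < r ↔ ballDepth r ≤ N := by
  rw [ballDepth, Nat.add_one_le_iff, Nat.floor_lt (neg_nonneg.mpr (Real.log_nonpos h0.le h1)),
    neg_lt, Real.lt_log_iff_exp_lt h0]

lemma le_sInf_ne_iff {A : Type*} {x y : ℕ → A} (hxy : x ≠ y) (k : ℕ) :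
    k ≤ sInf {i | x i ≠ y i} ↔ ∀ i < k, x i = y i := by
  have hne : {i | x i ≠ y i}.Nonempty := Function.ne_iff.mp hxy
  rw [le_csInf_iff' hne]
  exact ⟨fun h i hi => by_contra fun hne => (h hne).not_gt hi,
    fun h i hi => le_of_not_gt fun hik => hi (h i hik)⟩

lemma sball_eq_cyl {A : Type*} (y : ℕ → A) {r : ℝ} (h0 : 0 < r) (h1 : r ≤ 1) :
    sball y r = cyl (fun i : Fin (ballDepth r) => y i) := by
  ext x
  by_cases hxy : x = y
  · subst hxy; simp [sball, sdist, cyl, h0]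
  · simp only [sball, sdist, if_neg hxy, mem_ofPred_eq, exp_neg_natCast_lt_iff_ballDepth_le h0 h1,
      le_sInf_ne_iff hxy, cyl, Fin.forall_iff]

lemma integral_comp_measure_sball {A : Type*} [Fintype A] [MeasurableSpace A]
    [MeasurableSingletonClass A] (P : Measure (ℕ → A)) [IsFiniteMeasure P] (f : ℝ → ℝ)
    {r : ℝ} (h0 : 0 < r) (h1 : r ≤ 1) :
    ∫ y, f (P (sball y r)).toReal ∂P
      = ∑ w : Fin (ballDepth r) → A, f (P (cyl w)).toReal * (P (cyl w)).toReal := by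
  have hsum : ∀ y : ℕ → A, f (P (sball y r)).toReal
      = ∑ w : Fin (ballDepth r) → A, (cyl w).indicator (fun _ => f (P (cyl w)).toReal) y := by
    intro y
    rw [Finset.sum_eq_single_of_mem (fun i : Fin (ballDepth r) => y i) (Finset.mem_univ _)]
    · rw [sball_eq_cyl y h0 h1, indicator_of_mem (show y ∈ cyl _ from fun i => rfl)]
    · intro w _ hw
      exact indicator_of_notMem (fun hy => hw (funext fun i => (hy i).symm)) _
  simp_rw [hsum]
  rw [integral_finsetSum _ fun w _ => (integrable_const _).indicator (measurableSet_cyl w)]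
  refine Finset.sum_congr rfl fun w _ => ?_
  rw [integral_indicator_const _ (measurableSet_cyl w), smul_eq_mul, mul_comm, measureReal_def]

lemma tendsto_ballDepth : Tendsto ballDepth (𝓝[>] 0) atTop :=
  (tendsto_add_atTop_nat 1).comp
    (tendsto_nat_floor_atTop.comp (tendsto_neg_atBot_atTop.comp Real.tendsto_log_nhdsGT_zero))

lemma tendsto_ballDepth_div_neg_log :
    Tendsto (fun r => (ballDepth r : ℝ) / -Real.log r) (𝓝[>] 0) (𝓝 1) := by
  have hlog := tendsto_neg_atBot_atTop.comp Real.tendsto_log_nhdsGT_zero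
  have h := (tendsto_nat_floor_div_atTop.comp hlog).add hlog.inv_tendsto_atTop
  rw [add_zero] at h
  refine h.congr fun r => ?_
  simp only [Function.comp_apply, Pi.inv_apply, ballDepth]
  push_cast
  ring

theorem generalized_dimension_eq_renyi_entropy_general
    {A : Type*} [Fintype A] [MeasurableSpace A] [MeasurableSingletonClass A]
    (P : Measure (ℕ → A)) [IsProbabilityMeasure P]
    (q : ℝ) (hq : 1 < q) (Hq : ℝ)
    (hHq : Tendsto (fun k : ℕ =>
        Real.log (∑ w : Fin k → A, (P (cyl w)).toReal ^ q) / ((1 - q) * (k : ℝ)))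
      atTop (𝓝 Hq)) :
    Tendsto (fun r : ℝ =>
        Real.log (∫ y, (P (sball y r)).toReal ^ (q - 1) ∂P) / ((q - 1) * Real.log r))
      (𝓝[>] (0 : ℝ)) (𝓝 Hq) := by
  have h := (hHq.comp tendsto_ballDepth).mul tendsto_ballDepth_div_neg_log
  rw [mul_one] at h
  refine h.congr' ?_
  filter_upwards [Ioo_mem_nhdsGT (zero_lt_one' ℝ)] with r ⟨h0, h1⟩
  have hint : ∫ y, (P (sball y r)).toReal ^ (q - 1) ∂P
      = ∑ w : Fin (ballDepth r) → A, (P (cyl w)).toReal ^ q := by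
    rw [integral_comp_measure_sball P (· ^ (q - 1)) h0 h1.le]
    refine Finset.sum_congr rfl fun w _ => ?_
    rw [← Real.rpow_add_one' ENNReal.toReal_nonneg (by linarith), sub_add_cancel]
  have hdepth : (ballDepth r : ℝ) ≠ 0 := Nat.cast_ne_zero.mpr (Nat.succ_ne_zero _)
  rw [Function.comp_apply, hint, div_mul_div_comm, mul_comm (Real.log _),
    show (1 - q) * ballDepth r * -Real.log r = ballDepth r * ((q - 1) * Real.log r) by ring,
    mul_div_mul_left _ _ hdepth]

/-- for the symbolic metric, the generalized dimension of order `q > 1` of `P`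
exists and equals the Rényi entropy `H_q`. -/
theorem generalized_dimension_eq_renyi_entropy
    {A : Type*} [Fintype A] [Nonempty A] [MeasurableSpace A] [MeasurableSingletonClass A]
    (P : Measure (ℕ → A)) [IsProbabilityMeasure P]
    (q : ℝ) (hq : 1 < q) (Hq : ℝ)
    (hHq : Tendsto (fun k : ℕ =>
        Real.log (∑ w : Fin k → A, (P (cyl w)).toReal ^ q) / ((1 - q) * (k : ℝ)))
      atTop (𝓝 Hq)) :
    Tendsto (fun r : ℝ =>
        Real.log (∫ y, (P (sball y r)).toReal ^ (q - 1) ∂P) / ((q - 1) * Real.log r))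
      (𝓝[>] (0 : ℝ)) (𝓝 Hq) :=
  generalized_dimension_eq_renyi_entropy_general P q hq Hq hHq

end Stmt8
end

section
/- Let A be a finite alphabet, σ the left shift on A^ℕ, and P a σ-invariant Borel probability measure on A^ℕ which is α-mixing with rate α(n) ≤ β e^{−κn} for some β > 0. Fix an integer q ≥ 2, suppose the Rényi entropy H_q of P exists and is strictly positive, set τ_q = (q−1)H_q, and suppose κ > τ_q. Let P_q = P^{⊗q}, define Y_i(x) = inf{j ≥ 0 : x^s_{i+j} ≠ x^1_{i+j} for some s ∈ {2,…,q}}, and assume there is C₂ > 0 with P_q(Y_0 > u) ≤ C₂ e^{−τ_q u} for all integers u ≥ 1. Fix s ∈ ℝ and set u_n = ⌊(log n + s)/τ_q⌋. Then there exists ε₂ ∈ (0,1) such that lim_{n→∞} n Σ_{j=2}^{⌊n^{ε₂}⌋} P_q({Y_0 > u_n} ∩ {Y_1 ≤ u_n} ∩ {Y_j > u_n}) = 0. -/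
/-!
For `2 ≤ j ≤ u + 1` the event is empty. For larger `j` it lies in `{Y₀ > u'} ∩ {Y_j > u}` with
`u' = ⌊δ u⌋`, an event about two blocks of coordinates separated by a gap `j - u' - 1 > u - u'`.
Splitting it over pairs of cylinders and applying α-mixing to each pair bounds its `P_q`-measure by
`P_q(Y₀ > u') P_q(Y₀ > u) + q α(j - u' - 1) ≲ e^{-τ_q (1 + δ) u} + e^{-κ (1 - δ) u}`.
Since `e^{-τ_q u_n} ≈ 1/n`, multiplying by `n` and by the at most `n^ε` values of `j` leaves
`n^{ε - δ} + n^{1 + ε - κ (1 - δ) / τ_q}`, which tends to zero once `ε < δ` and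
`(1 + ε) τ_q < κ (1 - δ)`; such `ε, δ` exist because `κ > τ_q`.
-/

open MeasureTheory Filter Set Topology

namespace Stmt15

/-- The cylinder set of length `k` determined by a word `w`. -/
def cyl {A : Type*} {k : ℕ} (w : Fin k → A) : Set (ℕ → A) :=
  {x | ∀ i : Fin k, x (i : ℕ) = w i}

/-- The left shift. -/
def shift {A : Type*} : (ℕ → A) → (ℕ → A) := fun x n => x (n + 1)

/-- `P` is α-mixing with rate `α`. -/
def AlphaMixing {A : Type*} [MeasurableSpace A] (P : Measure (ℕ → A)) (α : ℕ → ℝ) : Prop :=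
  ∀ m n : ℕ, 1 ≤ m → 1 ≤ n → ∀ E F : Set (ℕ → A),
    MeasurableSet[MeasurableSpace.comap (fun (x : ℕ → A) (i : Fin m) => x (i : ℕ))
      MeasurableSpace.pi] E →
    MeasurableSet F →
    |(P (E ∩ shift^[m + n] ⁻¹' F)).toReal - (P E).toReal * (P F).toReal| ≤ α n

/-- `Y_i(x) = inf{j ≥ 0 : x^s_{i+j} ≠ x^1_{i+j} for some s}`, valued in `ℕ∞`. -/
noncomputable def Ymatch {A : Type*} {q : ℕ} [NeZero q] (i : ℕ) (x : Fin q → ℕ → A) : ℕ∞ :=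
  sInf ((fun m : ℕ => (m : ℕ∞)) '' {m : ℕ | ∃ s : Fin q, x s (i + m) ≠ x 0 (i + m)})

section Words

variable {A : Type*}

lemma shift_iterate_apply (j : ℕ) (y : ℕ → A) (n : ℕ) : shift^[j] y n = y (n + j) := by
  induction j generalizing y with
  | zero => rfl
  | succ j ih => simp [Function.iterate_succ_apply, ih, shift, Nat.add_assoc]

lemma disjoint_cyl {k : ℕ} {w w' : Fin k → A} (h : w ≠ w') : Disjoint (cyl w) (cyl w') :=
  Set.disjoint_left.mpr fun _ hx hx' => h (funext fun i => (hx i).symm.trans (hx' i))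

variable {q : ℕ} [NeZero q]

lemma lt_Ymatch_iff (i u : ℕ) (x : Fin q → ℕ → A) :
    (u : ℕ∞) < Ymatch i x ↔ ∀ m ≤ u, ∀ s, x s (i + m) = x 0 (i + m) := by
  rw [← ENat.add_one_le_iff (ENat.natCast_ne_top u), Ymatch, le_sInf_iff]
  simp only [forall_mem_image, mem_ofPred_eq]
  refine ⟨fun h m hm s => ?_, fun h m ⟨s, hs⟩ => ?_⟩
  · by_contra hne
    exact absurd (h ⟨s, hne⟩) (by norm_cast; omega)
  · by_contra hle
    exact hs (h m (by norm_cast at hle; omega) s)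

lemma lt_Ymatch_iff_exists_cyl (i u : ℕ) (x : Fin q → ℕ → A) :
    (u : ℕ∞) < Ymatch i x ↔ ∃ w : Fin (u + 1) → A, ∀ s, shift^[i] (x s) ∈ cyl w := by
  simp only [lt_Ymatch_iff, cyl, mem_ofPred_eq, shift_iterate_apply]
  refine ⟨fun h => ⟨fun m => x 0 (i + m), fun s m => ?_⟩, fun ⟨w, hw⟩ m hm s => ?_⟩
  · rw [Nat.add_comm]; exact h m (Nat.lt_succ_iff.mp m.2) s
  · rw [Nat.add_comm]
    exact (hw s ⟨m, Nat.lt_succ_of_le hm⟩).trans (hw 0 ⟨m, Nat.lt_succ_of_le hm⟩).symm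

end Words

section Events

variable {A : Type*} {q : ℕ} [NeZero q]

variable (q) in
def shortReturnEvent (u j : ℕ) : Set (Fin q → ℕ → A) :=
  {x | (u : ℕ∞) < Ymatch 0 x ∧ Ymatch 1 x ≤ u ∧ (u : ℕ∞) < Ymatch j x}

/-- `Y₀ > u` leaves position `u + 1` as the only place for the mismatch that `Y₁ ≤ u` demands,
and `Y_j > u` rules it out there since `j ≤ u + 1 ≤ j + u`. -/
lemma shortReturnEvent_eq_empty {u j : ℕ} (hj : 2 ≤ j) (hju : j ≤ u + 1) :
    shortReturnEvent (A := A) q u j = ∅ := by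
  refine eq_empty_iff_forall_notMem.mpr fun x ⟨h0, h1, hj'⟩ => ?_
  rw [← not_lt, lt_Ymatch_iff] at h1
  rw [lt_Ymatch_iff] at h0 hj'
  refine h1 fun m hm s => ?_
  rcases hm.lt_or_eq with hm | rfl
  · simpa using h0 (1 + m) (by omega) s
  · simpa [show j + (m + 1 - j) = 1 + m by omega] using hj' (m + 1 - j) (by omega) s

lemma shortReturnEvent_subset_iUnion {u' u j : ℕ} (hu' : u' ≤ u) :
    shortReturnEvent (A := A) q u j ⊆ ⋃ p : (Fin (u' + 1) → A) × (Fin (u + 1) → A),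
      univ.pi fun _ => cyl p.1 ∩ shift^[j] ⁻¹' cyl p.2 := by
  rintro x ⟨h0, -, hj⟩
  obtain ⟨w, hw⟩ := (lt_Ymatch_iff_exists_cyl 0 u' x).mp ((Nat.cast_le.mpr hu').trans_lt h0)
  obtain ⟨v, hv⟩ := (lt_Ymatch_iff_exists_cyl j u x).mp hj
  exact mem_iUnion.mpr ⟨(w, v), fun s _ => ⟨hw s, hv s⟩⟩

end Events

lemma measureReal_univ_pi_const {α : Type*} [MeasurableSpace α] (μ : Measure α) [SigmaFinite μ]
    (n : ℕ) (S : Set α) :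
    (Measure.pi fun _ : Fin n => μ).real (univ.pi fun _ => S) = μ.real S ^ n := by
  simp [measureReal_def, Measure.pi_pi, ENNReal.toReal_pow]

section Measure

variable {A : Type*} [MeasurableSpace A]

lemma measurable_shift : Measurable (shift : (ℕ → A) → ℕ → A) :=
  measurable_pi_lambda _ fun n => measurable_pi_apply (n + 1)

lemma measurableSet_comap_cyl [MeasurableSingletonClass A] {k : ℕ} (w : Fin k → A) :
    MeasurableSet[MeasurableSpace.comap (fun (x : ℕ → A) (i : Fin k) => x (i : ℕ))
      MeasurableSpace.pi] (cyl w) :=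
  ⟨{w}, measurableSet_singleton w, by ext x; simp [cyl, funext_iff]⟩

lemma measurableSet_cyl [MeasurableSingletonClass A] {k : ℕ} (w : Fin k → A) :
    MeasurableSet (cyl w) :=
  (measurable_pi_lambda _ fun _ => measurable_pi_apply _).comap_le _ (measurableSet_comap_cyl w)

variable [Fintype A] (P : Measure (ℕ → A)) [IsProbabilityMeasure P] {q : ℕ} [NeZero q]

lemma measureReal_shortReturnEvent_le_sum {u' u j : ℕ} (hu' : u' ≤ u) :
    (Measure.pi fun _ : Fin q => P).real (shortReturnEvent q u j) ≤
      ∑ p : (Fin (u' + 1) → A) × (Fin (u + 1) → A),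
        P.real (cyl p.1 ∩ shift^[j] ⁻¹' cyl p.2) ^ q :=
  (measureReal_mono (shortReturnEvent_subset_iUnion hu')).trans <|
    (measureReal_iUnion_fintype_le _).trans_eq (by simp only [measureReal_univ_pi_const])

variable [MeasurableSingletonClass A]

lemma sum_measureReal_cyl_pow_le (u : ℕ) :
    ∑ w : Fin (u + 1) → A, P.real (cyl w) ^ q ≤
      (Measure.pi fun _ : Fin q => P).real {x | (u : ℕ∞) < Ymatch 0 x} := by
  have hd : Pairwise fun w w' : Fin (u + 1) → A =>
      Disjoint (univ.pi fun _ : Fin q => cyl w) (univ.pi fun _ => cyl w') :=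
    fun w w' h => disjoint_univ_pi.mpr ⟨0, disjoint_cyl h⟩
  have hm (w : Fin (u + 1) → A) : MeasurableSet (univ.pi fun _ : Fin q => cyl w) :=
    .univ_pi fun _ => measurableSet_cyl w
  calc ∑ w : Fin (u + 1) → A, P.real (cyl w) ^ q
      = (Measure.pi fun _ : Fin q => P).real (⋃ w : Fin (u + 1) → A, univ.pi fun _ => cyl w) := by
        rw [measureReal_iUnion_fintype (μ := Measure.pi fun _ : Fin q => P) hd hm]
        simp only [measureReal_univ_pi_const]
    _ ≤ _ := measureReal_mono <| iUnion_subset fun w x hx =>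
        (lt_Ymatch_iff_exists_cyl 0 u x).mpr ⟨w, fun s => hx s (mem_univ s)⟩

lemma sum_measureReal_cyl_inter_le_one (k l j : ℕ) :
    ∑ p : (Fin k → A) × (Fin l → A), P.real (cyl p.1 ∩ shift^[j] ⁻¹' cyl p.2) ≤ 1 := by
  rw [← measureReal_iUnion_fintype]
  · exact measureReal_le_one
  · rintro ⟨w, v⟩ ⟨w', v'⟩ h
    by_cases hw : w = w'
    · exact ((disjoint_cyl fun hv => h (Prod.ext hw hv)).preimage _).mono
        inter_subset_right inter_subset_right
    · exact (disjoint_cyl hw).mono inter_subset_left inter_subset_left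
  · exact fun p =>
      (measurableSet_cyl p.1).inter (measurable_shift.iterate j (measurableSet_cyl p.2))

end Measure

lemma pow_le_pow_add_of_sub_le {x y r : ℝ} {n : ℕ} (hn : 2 ≤ n) (hy : 0 ≤ y) (hx : 0 ≤ x)
    (hx1 : x ≤ 1) (hr : 0 ≤ r) (hxy : x - y ≤ r) : x ^ n ≤ y ^ n + n * r * x := by
  rcases le_total x y with hle | hle
  · have := pow_le_pow_left₀ hx hle n
    have : 0 ≤ n * r * x := by positivity
    linarith
  · have hdiff := (le_abs_self _).trans (abs_pow_sub_pow_le x y n)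
    rw [abs_of_nonneg (sub_nonneg.2 hle), abs_of_nonneg hx, abs_of_nonneg hy,
      max_eq_left hle] at hdiff
    have hpow : x ^ (n - 1) ≤ x := pow_le_of_le_one hx hx1 (by omega)
    calc x ^ n ≤ y ^ n + (x - y) * n * x ^ (n - 1) := by linarith
      _ ≤ y ^ n + r * n * x := by gcongr
      _ = y ^ n + n * r * x := by ring

namespace AlphaMixing

variable {A : Type*} [MeasurableSpace A] {P : Measure (ℕ → A)} {α : ℕ → ℝ}

lemma nonneg (h : AlphaMixing P α) {n : ℕ} (hn : 1 ≤ n) : 0 ≤ α n :=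
  (abs_nonneg _).trans (h 1 n le_rfl hn univ univ MeasurableSet.univ MeasurableSet.univ)

variable [MeasurableSingletonClass A]

lemma measureReal_cyl_inter_le (h : AlphaMixing P α) {k l j : ℕ} (hk : 1 ≤ k) (hkj : k < j)
    (w : Fin k → A) (v : Fin l → A) :
    P.real (cyl w ∩ shift^[j] ⁻¹' cyl v) ≤ P.real (cyl w) * P.real (cyl v) + α (j - k) := by
  have := h k (j - k) hk (by omega) _ _ (measurableSet_comap_cyl w) (measurableSet_cyl v)
  simp only [Nat.add_sub_cancel' hkj.le, ← measureReal_def] at this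
  linarith [(abs_le.mp this).2]

variable [Fintype A] [IsProbabilityMeasure P] {q : ℕ} [NeZero q]

/-- For each pair of cylinders `c ≤ a b + α`, and `c ^ q ≤ (a b) ^ q + q α c` since `c ≤ 1`;
summing, the product terms factor and the `c` sum to at most one. -/
lemma measureReal_shortReturnEvent_le (h : AlphaMixing P α) (hq : 2 ≤ q) {u' u j : ℕ}
    (hu' : u' ≤ u) (hj : u' + 2 ≤ j) :
    (Measure.pi fun _ : Fin q => P).real (shortReturnEvent q u j) ≤
      (Measure.pi fun _ : Fin q => P).real {x | (u' : ℕ∞) < Ymatch 0 x} *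
        (Measure.pi fun _ : Fin q => P).real {x | (u : ℕ∞) < Ymatch 0 x} +
      q * α (j - (u' + 1)) := by
  set r := α (j - (u' + 1))
  set c : (Fin (u' + 1) → A) × (Fin (u + 1) → A) → ℝ :=
    fun p => P.real (cyl p.1 ∩ shift^[j] ⁻¹' cyl p.2)
  have hc (p) : c p ^ q ≤ (P.real (cyl p.1) * P.real (cyl p.2)) ^ q + q * r * c p :=
    pow_le_pow_add_of_sub_le hq (by positivity) measureReal_nonneg measureReal_le_one
      (h.nonneg (by omega))
      (by linarith [h.measureReal_cyl_inter_le (by omega) (by omega : u' + 1 < j) p.1 p.2])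
  calc (Measure.pi fun _ : Fin q => P).real (shortReturnEvent q u j)
      ≤ ∑ p, c p ^ q := measureReal_shortReturnEvent_le_sum P hu'
    _ ≤ ∑ p, ((P.real (cyl p.1) * P.real (cyl p.2)) ^ q + q * r * c p) :=
        Finset.sum_le_sum fun p _ => hc p
    _ = (∑ w : Fin (u' + 1) → A, P.real (cyl w) ^ q) * (∑ v : Fin (u + 1) → A, P.real (cyl v) ^ q)
          + q * r * ∑ p, c p := by
        simp only [Finset.sum_add_distrib, mul_pow, ← Finset.mul_sum, Finset.sum_mul_sum,
          Fintype.sum_prod_type]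
    _ ≤ (Measure.pi fun _ : Fin q => P).real {x | (u' : ℕ∞) < Ymatch 0 x} *
          (Measure.pi fun _ : Fin q => P).real {x | (u : ℕ∞) < Ymatch 0 x} + q * r * 1 := by
        have hr : 0 ≤ r := h.nonneg (by omega)
        gcongr
        exacts [sum_measureReal_cyl_pow_le P u', sum_measureReal_cyl_pow_le P u,
          sum_measureReal_cyl_inter_le_one P _ _ j]
    _ = _ := by rw [mul_one]

lemma measureReal_shortReturnEvent_le_exp (h : AlphaMixing P α) (hq : 2 ≤ q) {β κ τ C : ℝ}
    (hβ : 0 ≤ β) (hκ : 0 ≤ κ) (hα : ∀ n : ℕ, 1 ≤ n → α n ≤ β * Real.exp (-κ * n))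
    (hC : ∀ u : ℕ, 1 ≤ u →
      (Measure.pi fun _ : Fin q => P).real {x | (u : ℕ∞) < Ymatch 0 x} ≤ C * Real.exp (-τ * u))
    {u' u j : ℕ} (hu'1 : 1 ≤ u') (hu' : u' ≤ u) (hj : 2 ≤ j) :
    (Measure.pi fun _ : Fin q => P).real (shortReturnEvent q u j) ≤
      C ^ 2 * Real.exp (-τ * (u' + u)) + q * β * Real.exp (-κ * (u - u' + 1)) := by
  rcases le_or_gt j (u + 1) with hju | hju
  · rw [shortReturnEvent_eq_empty hj hju, measureReal_empty]
    positivity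
  have hprod : (Measure.pi fun _ : Fin q => P).real {x | (u' : ℕ∞) < Ymatch 0 x} *
      (Measure.pi fun _ : Fin q => P).real {x | (u : ℕ∞) < Ymatch 0 x} ≤
      C ^ 2 * Real.exp (-τ * (u' + u)) := by
    calc _ ≤ (C * Real.exp (-τ * u')) * (C * Real.exp (-τ * u)) :=
          mul_le_mul (hC u' hu'1) (hC u (hu'1.trans hu')) measureReal_nonneg
            (measureReal_nonneg.trans (hC u' hu'1))
      _ = C ^ 2 * Real.exp (-τ * (u' + u)) := by
          rw [mul_add, Real.exp_add]
          ring
  have hgap : α (j - (u' + 1)) ≤ β * Real.exp (-κ * (u - u' + 1)) := by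
    refine (hα _ (by omega)).trans (mul_le_mul_of_nonneg_left (Real.exp_le_exp.mpr ?_) hβ)
    have : (u : ℝ) - u' + 1 ≤ ((j - (u' + 1) : ℕ) : ℝ) := by
      rw [Nat.cast_sub (by omega)]
      push_cast
      linarith [show (u : ℝ) + 2 ≤ j by exact_mod_cast hju]
    linarith [mul_le_mul_of_nonneg_left this hκ]
  have := mul_le_mul_of_nonneg_left hgap (Nat.cast_nonneg q)
  linarith [h.measureReal_shortReturnEvent_le hq hu' (by omega : u' + 2 ≤ j)]

end AlphaMixing

lemma exists_exponents_of_lt {τ κ : ℝ} (hτ : 0 < τ) (hκ : τ < κ) :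
    ∃ δ ε : ℝ, 0 < ε ∧ ε < δ ∧ δ < 1 ∧ (1 + ε) * τ < κ * (1 - δ) := by
  set ε := (κ - τ) / (2 * (τ + 2 * κ))
  have hε : ε * (τ + 2 * κ) = (κ - τ) / 2 := by
    rw [div_mul_eq_mul_div, mul_div_mul_right _ _ (by linarith)]
  have hε0 : 0 < ε := div_pos (by linarith) (by linarith)
  exact ⟨2 * ε, ε, hε0, by linarith, by nlinarith, by linarith⟩

lemma tendsto_exp_of_le_linear {f : ℕ → ℝ} {e c : ℝ} (he : e < 0) (hf : ∀ u, f u ≤ e * u + c) :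
    Tendsto (fun u => Real.exp (f u)) atTop (𝓝 0) :=
  Real.tendsto_exp_atBot.comp <| tendsto_atBot_mono hf <|
    tendsto_atBot_add_const_right _ c (tendsto_natCast_atTop_atTop.const_mul_atTop_of_neg he)

lemma tendsto_shortReturn_bound {τ κ δ ε : ℝ} (hτ : 0 < τ) (hκ : 0 ≤ κ) (hδ : 0 ≤ δ)
    (hεδ : ε < δ) (hκδ : (1 + ε) * τ < κ * (1 - δ)) (C D s : ℝ) :
    Tendsto (fun u : ℕ => Real.exp ((1 + ε) * (τ * (u + 1) - s)) *
      (C * Real.exp (-τ * (⌊δ * u⌋₊ + u)) + D * Real.exp (-κ * (u - ⌊δ * u⌋₊ + 1))))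
      atTop (𝓝 0) := by
  have h₁ : Tendsto (fun u : ℕ =>
      Real.exp ((1 + ε) * (τ * (u + 1) - s) + -τ * (⌊δ * u⌋₊ + u))) atTop (𝓝 0) := by
    refine tendsto_exp_of_le_linear (e := τ * (ε - δ)) (c := (1 + ε) * (τ - s) + τ)
      (by nlinarith) fun u => ?_
    have := mul_le_mul_of_nonneg_left (Nat.sub_one_lt_floor (δ * u)).le hτ.le
    linarith
  have h₂ : Tendsto (fun u : ℕ =>
      Real.exp ((1 + ε) * (τ * (u + 1) - s) + -κ * (u - ⌊δ * u⌋₊ + 1))) atTop (𝓝 0) := by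
    refine tendsto_exp_of_le_linear (e := (1 + ε) * τ - κ * (1 - δ)) (c := (1 + ε) * (τ - s) - κ)
      (by linarith) fun u => ?_
    have := mul_le_mul_of_nonneg_left (Nat.floor_le (by positivity : 0 ≤ δ * u)) hκ
    linarith
  convert (h₁.const_mul C).add (h₂.const_mul D) using 1
  · funext u
    simp only [Real.exp_add]
    ring
  · simp

lemma sum_Icc_floor_le_mul {f : ℕ → ℝ} {a : ℕ} {x B : ℝ} (ha : 1 ≤ a) (hx : 0 ≤ x) (hB : 0 ≤ B)
    (h : ∀ j ∈ Finset.Icc a ⌊x⌋₊, f j ≤ B) : ∑ j ∈ Finset.Icc a ⌊x⌋₊, f j ≤ x * B := by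
  calc ∑ j ∈ Finset.Icc a ⌊x⌋₊, f j ≤ (Finset.Icc a ⌊x⌋₊).card • B :=
        Finset.sum_le_card_nsmul _ _ _ h
    _ ≤ x * B := by
        rw [nsmul_eq_mul, Nat.card_Icc]
        gcongr
        exact (Nat.cast_le.mpr (by omega : ⌊x⌋₊ + 1 - a ≤ ⌊x⌋₊)).trans (Nat.floor_le hx)

lemma natCast_mul_rpow_le_exp_floor {τ ε : ℝ} (s : ℝ) (hτ : 0 < τ) (hε : 0 ≤ 1 + ε) {n : ℕ}
    (hn : n ≠ 0) :
    (n : ℝ) * (n : ℝ) ^ ε ≤ Real.exp ((1 + ε) * (τ * (⌊(Real.log n + s) / τ⌋₊ + 1) - s)) := by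
  have hn' : (0 : ℝ) < n := by positivity
  have hlog : Real.log n ≤ τ * (⌊(Real.log n + s) / τ⌋₊ + 1) - s := by
    have := Nat.lt_floor_add_one ((Real.log n + s) / τ)
    rw [div_lt_iff₀ hτ] at this
    linarith
  calc (n : ℝ) * (n : ℝ) ^ ε = Real.exp ((1 + ε) * Real.log n) := by
        rw [Real.rpow_def_of_pos hn', add_mul, one_mul, Real.exp_add, Real.exp_log hn', mul_comm ε]
    _ ≤ _ := Real.exp_le_exp.mpr (mul_le_mul_of_nonneg_left hlog hε)

theorem short_returns_sum_vanishes_general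
    {A : Type*} [Fintype A] [MeasurableSpace A] [MeasurableSingletonClass A]
    (P : Measure (ℕ → A)) [IsProbabilityMeasure P]
    (α : ℕ → ℝ) (hmix : AlphaMixing P α)
    (q : ℕ) [NeZero q] (hq : 2 ≤ q) (Hq : ℝ) (hHq_pos : 0 < Hq)
    (β κ : ℝ) (hβ : 0 < β) (hκ : ((q : ℝ) - 1) * Hq < κ)
    (hα : ∀ n : ℕ, 1 ≤ n → α n ≤ β * Real.exp (-κ * n))
    (C₂ : ℝ)
    (hC₂bound : ∀ u : ℕ, 1 ≤ u →
      ((Measure.pi fun _ : Fin q => P)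
          {x : Fin q → ℕ → A | ((u : ℕ) : ℕ∞) < Ymatch 0 x}).toReal
        ≤ C₂ * Real.exp (-(((q : ℝ) - 1) * Hq) * u))
    (s : ℝ) :
    ∃ ε₂ : ℝ, 0 < ε₂ ∧ ε₂ < 1 ∧
      Tendsto (fun n : ℕ => (n : ℝ) *
          ∑ j ∈ Finset.Icc 2 ⌊(n : ℝ) ^ ε₂⌋₊,
            ((Measure.pi fun _ : Fin q => P)
              {x : Fin q → ℕ → A |
                ((⌊(Real.log n + s) / (((q : ℝ) - 1) * Hq)⌋₊ : ℕ) : ℕ∞) < Ymatch 0 x ∧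
                Ymatch 1 x ≤ ((⌊(Real.log n + s) / (((q : ℝ) - 1) * Hq)⌋₊ : ℕ) : ℕ∞) ∧
                ((⌊(Real.log n + s) / (((q : ℝ) - 1) * Hq)⌋₊ : ℕ) : ℕ∞) < Ymatch j x}).toReal)
        atTop (𝓝 0) := by
  set τ := ((q : ℝ) - 1) * Hq
  have hτ : 0 < τ := mul_pos (by linarith [show (2 : ℝ) ≤ q by exact_mod_cast hq]) hHq_pos
  obtain ⟨δ, ε, hε, hεδ, hδ1, hκδ⟩ := exists_exponents_of_lt hτ hκ
  refine ⟨ε, hε, hεδ.trans hδ1, ?_⟩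
  set u : ℕ → ℕ := fun n => ⌊(Real.log n + s) / τ⌋₊
  have hu : Tendsto u atTop atTop := tendsto_nat_floor_atTop.comp <|
    (tendsto_atTop_add_const_right _ s
      (Real.tendsto_log_atTop.comp tendsto_natCast_atTop_atTop)).atTop_div_const hτ
  have hu' : ∀ᶠ n in atTop, 1 ≤ ⌊δ * u n⌋₊ := (tendsto_nat_floor_atTop.comp <|
    (tendsto_natCast_atTop_atTop.comp hu).const_mul_atTop (hε.trans hεδ)).eventually_ge_atTop 1
  refine squeeze_zero' (.of_forall fun n => by positivity) ?_ <| .comp (tendsto_shortReturn_bound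
    hτ (hτ.trans hκ).le (hε.trans hεδ).le hεδ hκδ (C₂ ^ 2) (q * β) s) hu
  filter_upwards [eventually_ne_atTop 0, hu'] with n hn hu'n
  have hu'u : ⌊δ * u n⌋₊ ≤ u n :=
    Nat.floor_le_of_le (mul_le_of_le_one_left (Nat.cast_nonneg _) hδ1.le)
  have hterm (j) (hj : j ∈ Finset.Icc 2 ⌊(n : ℝ) ^ ε⌋₊) :=
    hmix.measureReal_shortReturnEvent_le_exp hq hβ.le (hτ.trans hκ).le hα hC₂bound hu'n hu'u
      (Finset.mem_Icc.mp hj).1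
  have hsum := sum_Icc_floor_le_mul one_le_two (by positivity) (by positivity) hterm
  calc _ ≤ (n : ℝ) * ((n : ℝ) ^ ε * _) := mul_le_mul_of_nonneg_left hsum (Nat.cast_nonneg n)
    _ ≤ _ := by
        rw [← mul_assoc]
        exact mul_le_mul_of_nonneg_right (natCast_mul_rpow_le_exp_floor s hτ (by linarith) hn)
          (by positivity)

/-- the Д₁'(uₙ) short-return sum vanishes under exponential α-mixing with
`κ > τ_q = (q-1)H_q`. -/
theorem short_returns_sum_vanishes
    {A : Type*} [Fintype A] [Nonempty A] [MeasurableSpace A] [MeasurableSingletonClass A]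
    (P : Measure (ℕ → A)) [IsProbabilityMeasure P]
    (hinv : P.map shift = P)
    (α : ℕ → ℝ) (hmix : AlphaMixing P α)
    (q : ℕ) [NeZero q] (hq : 2 ≤ q) (Hq : ℝ) (hHq_pos : 0 < Hq)
    (hHq : Tendsto (fun k : ℕ =>
        Real.log (∑ w : Fin k → A, (P (cyl w)).toReal ^ q) / ((1 - (q : ℝ)) * (k : ℝ)))
      atTop (𝓝 Hq))
    (β κ : ℝ) (hβ : 0 < β) (hκ : ((q : ℝ) - 1) * Hq < κ)
    (hα : ∀ n : ℕ, 1 ≤ n → α n ≤ β * Real.exp (-κ * n))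
    (C₂ : ℝ) (hC₂ : 0 < C₂)
    (hC₂bound : ∀ u : ℕ, 1 ≤ u →
      ((Measure.pi fun _ : Fin q => P)
          {x : Fin q → ℕ → A | ((u : ℕ) : ℕ∞) < Ymatch 0 x}).toReal
        ≤ C₂ * Real.exp (-(((q : ℝ) - 1) * Hq) * u))
    (s : ℝ) :
    ∃ ε₂ : ℝ, 0 < ε₂ ∧ ε₂ < 1 ∧
      Tendsto (fun n : ℕ => (n : ℝ) *
          ∑ j ∈ Finset.Icc 2 ⌊(n : ℝ) ^ ε₂⌋₊,
            ((Measure.pi fun _ : Fin q => P)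
              {x : Fin q → ℕ → A |
                ((⌊(Real.log n + s) / (((q : ℝ) - 1) * Hq)⌋₊ : ℕ) : ℕ∞) < Ymatch 0 x ∧
                Ymatch 1 x ≤ ((⌊(Real.log n + s) / (((q : ℝ) - 1) * Hq)⌋₊ : ℕ) : ℕ∞) ∧
                ((⌊(Real.log n + s) / (((q : ℝ) - 1) * Hq)⌋₊ : ℕ) : ℕ∞) < Ymatch j x}).toReal)
        atTop (𝓝 0) :=
  short_returns_sum_vanishes_general P α hmix q hq Hq hHq_pos β κ hβ hκ hα C₂ hC₂bound s

end Stmt15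
end

section
/- Let A be a finite alphabet, σ the left shift on A^ℕ, and P a σ-invariant Borel probability measure on A^ℕ which is α-mixing with rate α(n) ≤ β e^{−κn} for some β, κ > 0. Fix an integer q ≥ 2, suppose the Rényi entropy H_q of P exists and is strictly positive, set τ_q = (q−1)H_q, let P_q = P^{⊗q}, define Y_i(x) = inf{j ≥ 0 : x^s_{i+j} ≠ x^1_{i+j} for some s ∈ {2,…,q}}, and assume there is C₂ > 0 with P_q(Y_0 > u) ≤ C₂ e^{−τ_q u} for all integers u ≥ 1. Fix s ∈ ℝ, set u_n = ⌊(log n + s)/τ_q⌋, and define the events A_n = {Y_0 > u_n} ∩ {Y_1 ≤ u_n} and, for integers t, l ≥ 1, B_{t,l,n} = ⋂_{i=t}^{t+l−1} {x : (Y_i(x) > u_n and Y_{i+1}(x) ≤ u_n) fails}. Then there exists a constant C₅ > 0 such that for all n, t, l ≥ 1, |P_q(A_n ∩ B_{t,l,n}) − P_q(A_n) P_q(B_{0,l,n})| ≤ qβ e^{−κ(t/2 − 1)} + C₅ e^{−(t/2 − 1)τ_q}. -/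
/-!
Write `u = uₙ`. The event `A` depends only on the first `u + 2` symbols of each of the `q`
sequences, and `B_{t,l}` is the pull-back of `B_{0,l}` under the `t`-fold shift, so the
covariance is one of α-mixing for the product `P_q` across a gap `k = t - u - 2`. The product
is `q α`-mixing: replace the `q` coordinates of the shifted copy one at a time by independent
copies; each replacement, conditionally on the other coordinates, is an instance of the
α-mixing of `P`. This gives `q β e^{-κ k} ≤ q β e^{-κ (t/2 - 1)}` once `t ≥ 2u + 2` (and
`k ≥ 1`). In the remaining case `t ≤ 2u + 2`, the covariance is at most
`P_q(A) ≤ P_q(Y_0 > u) ≤ C₂ e^{-τ_q u} ≤ C₂ e^{-τ_q (t/2 - 1)}` (or `≤ 1` when `u = 0`).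
-/

open MeasureTheory Filter Set Topology

namespace Stmt16

/-- The cylinder set of length `k` determined by a word `w`. -/
def cyl {A : Type*} {k : ℕ} (w : Fin k → A) : Set (ℕ → A) :=
  {x | ∀ i : Fin k, x (i : ℕ) = w i}

/-- The left shift. -/
def shift {A : Type*} : (ℕ → A) → (ℕ → A) := fun x n => x (n + 1)

/-- `P` is α-mixing with rate `α`. -/
def AlphaMixing {A : Type*} [MeasurableSpace A] (P : Measure (ℕ → A)) (α : ℕ → ℝ) : Prop :=
  ∀ m n : ℕ, 1 ≤ m → 1 ≤ n → ∀ E F : Set (ℕ → A),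
    MeasurableSet[MeasurableSpace.comap (fun (x : ℕ → A) (i : Fin m) => x (i : ℕ))
      MeasurableSpace.pi] E →
    MeasurableSet F →
    |(P (E ∩ shift^[m + n] ⁻¹' F)).toReal - (P E).toReal * (P F).toReal| ≤ α n

/-- `Y_i(x) = inf{j ≥ 0 : x^s_{i+j} ≠ x^1_{i+j} for some s}`, valued in `ℕ∞`. -/
noncomputable def Ymatch {A : Type*} {q : ℕ} [NeZero q] (i : ℕ) (x : Fin q → ℕ → A) : ℕ∞ :=
  sInf ((fun m : ℕ => (m : ℕ∞)) '' {m : ℕ | ∃ s : Fin q, x s (i + m) ≠ x 0 (i + m)})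

/-- The event `A = {Y_0 > u} ∩ {Y_1 ≤ u}`. -/
noncomputable def Aev {A : Type*} (q : ℕ) [NeZero q] (u : ℕ) : Set (Fin q → ℕ → A) :=
  {x | (u : ℕ∞) < Ymatch 0 x ∧ Ymatch 1 x ≤ (u : ℕ∞)}

/-- The event `B_{t,l} = ⋂_{i=t}^{t+l-1} {(Y_i > u and Y_{i+1} ≤ u) fails}`. -/
noncomputable def Bev {A : Type*} (q : ℕ) [NeZero q] (u t l : ℕ) : Set (Fin q → ℕ → A) :=
  ⋂ i ∈ Finset.Ico t (t + l),
    {x | ¬((u : ℕ∞) < Ymatch i x ∧ Ymatch (i + 1) x ≤ (u : ℕ∞))}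

open Function (update)

section PiSlices

variable {ι X : Type*} [Fintype ι] [DecidableEq ι] [MeasurableSpace X]
  (ρ : Measure X) [IsProbabilityMeasure ρ]

theorem measure_pi_eq_lintegral_update {S : Set (ι → X)} (hS : MeasurableSet S) (i : ι) :
    Measure.pi (fun _ => ρ) S
      = ∫⁻ w, ρ {a | update w i a ∈ S} ∂Measure.pi (fun _ => ρ) := by
  have hf : Measurable (S.indicator (1 : (ι → X) → ENNReal)) := measurable_one.indicator hS
  have hslice : ∫⋯∫⁻_{i}, S.indicator 1 ∂(fun _ => ρ)
      = fun w => ρ {a | update w i a ∈ S} := by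
    ext w
    rw [lmarginal_singleton]
    exact lintegral_indicator_one (measurable_update w hS)
  rw [← lintegral_indicator_one hS, ← hslice]
  refine lintegral_eq_of_lmarginal_eq {i} hf (hf.lmarginal _) ?_
  ext w
  conv_rhs => rw [lmarginal_singleton]
  simp only [lmarginal_update_of_mem _ (Finset.mem_singleton_self i), lintegral_const,
    measure_univ, mul_one]

theorem abs_measureReal_pi_sub_le_of_update {S S' : Set (ι → X)} (hS : MeasurableSet S)
    (hS' : MeasurableSet S') (i : ι) {c : ℝ}
    (hc : ∀ w, |ρ.real {a | update w i a ∈ S} - ρ.real {a | update w i a ∈ S'}|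
      ≤ c) :
    |(Measure.pi fun _ => ρ).real S - (Measure.pi fun _ => ρ).real S'| ≤ c := by
  have hmeas : ∀ {T : Set (ι → X)}, MeasurableSet T →
      Measurable fun w => ρ {a | update w i a ∈ T} := fun hT =>
    measurable_measure_prodMk_left (measurable_update' hT)
  have hreal : ∀ {T : Set (ι → X)}, MeasurableSet T → (Measure.pi fun _ => ρ).real T
      = ∫ w, ρ.real {a | update w i a ∈ T} ∂Measure.pi (fun _ => ρ) := by
    intro T hT
    rw [measureReal_def, measure_pi_eq_lintegral_update ρ hT i, ← integral_toReal]
    · rfl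
    · exact (hmeas hT).aemeasurable
    · exact ae_of_all _ fun _ => measure_lt_top _ _
  have hint : ∀ {T : Set (ι → X)}, MeasurableSet T →
      Integrable (fun w => ρ.real {a | update w i a ∈ T}) (Measure.pi fun _ => ρ) :=
    fun hT => .of_bound (hmeas hT).ennreal_toReal.aestronglyMeasurable 1
      (ae_of_all _ fun _ => by
        rw [Real.norm_eq_abs, abs_of_nonneg measureReal_nonneg]; exact measureReal_le_one)
  rw [hreal hS, hreal hS', ← integral_sub (hint hS) (hint hS')]
  calc _ ≤ ∫ w, |ρ.real {a | update w i a ∈ S} - ρ.real {a | update w i a ∈ S'}|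
          ∂Measure.pi (fun _ => ρ) := abs_integral_le_integral_abs
    _ ≤ ∫ _, c ∂Measure.pi (fun _ => ρ) :=
      integral_mono_of_nonneg (ae_of_all _ fun _ => abs_nonneg _) (integrable_const c)
        (ae_of_all _ hc)
    _ = c := by simp

end PiSlices

section Hybrid

variable {X : Type*} {q : ℕ}

def hybrid (j : ℕ) (w : Fin q → X × X) : Fin q → X :=
  fun s => if (s : ℕ) < j then (w s).2 else (w s).1

theorem hybrid_zero (w : Fin q → X × X) : hybrid 0 w = fun s => (w s).1 := by
  funext s
  simp [hybrid]

theorem hybrid_self (w : Fin q → X × X) : hybrid q w = fun s => (w s).2 := by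
  funext s
  simp [hybrid]

theorem hybrid_update_of_le {j : ℕ} {i : Fin q} (hj : j ≤ i) (w : Fin q → X × X) (a : X × X) :
    hybrid j (update w i a) = update (hybrid j w) i a.1 := by
  ext s
  rcases eq_or_ne s i with rfl | hs
  · simp [hybrid, hj]
  · simp [hybrid, hs]

theorem hybrid_succ_update (i : Fin q) (w : Fin q → X × X) (a : X × X) :
    hybrid (i + 1) (update w i a) = update (hybrid i w) i a.2 := by
  ext s
  rcases eq_or_ne s i with rfl | hs
  · simp [hybrid]
  · have : (s : ℕ) < i + 1 ↔ (s : ℕ) < i := by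
      have := Fin.val_ne_of_ne hs; omega
    simp [hybrid, hs, this]

theorem measurable_hybrid [MeasurableSpace X] (j : ℕ) :
    Measurable (hybrid j : (Fin q → X × X) → Fin q → X) := by
  refine measurable_pi_lambda _ fun s => ?_
  by_cases h : (s : ℕ) < j
  · simp only [hybrid, h, if_true]; fun_prop
  · simp only [hybrid, h, if_false]; fun_prop

end Hybrid

section ProductMixing

variable {X : Type*} [MeasurableSpace X] (ρ : Measure X) [IsProbabilityMeasure ρ] {T : X → X}
  {q : ℕ} {E F : Set (Fin q → X)}

def hybridEvent (T : X → X) (E F : Set (Fin q → X)) (j : ℕ) : Set (Fin q → X × X) :=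
  {w | hybrid 0 w ∈ E ∧ T ∘ hybrid j w ∈ F}

theorem measurableSet_hybridEvent (hT : Measurable T) (hE : MeasurableSet E) (hF : MeasurableSet F)
    (j : ℕ) : MeasurableSet (hybridEvent T E F j) :=
  (measurable_hybrid 0 hE).inter ((measurable_pi_lambda _ fun s =>
    hT.comp ((measurable_pi_apply s).comp (measurable_hybrid j))) hF)

theorem measureReal_hybridEvent_zero (hT : Measurable T) (hE : MeasurableSet E)
    (hF : MeasurableSet F) :
    (Measure.pi fun _ => ρ.prod ρ).real (hybridEvent T E F 0)
      = (Measure.pi fun _ => ρ).real (E ∩ (fun x s => T (x s)) ⁻¹' F) := by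
  have h0 : MeasurePreserving (hybrid 0) (Measure.pi fun _ : Fin q => ρ.prod ρ)
      (Measure.pi fun _ => ρ) := by
    rw [show (hybrid 0 : (Fin q → X × X) → Fin q → X) = fun w s => (w s).1 from
      funext hybrid_zero]
    exact measurePreserving_pi _ _ fun _ => measurePreserving_fst
  exact h0.measureReal_preimage (hE.inter ((measurable_pi_lambda _ fun s =>
    hT.comp (measurable_pi_apply s)) hF)).nullMeasurableSet

theorem measureReal_hybridEvent_self (hT : MeasurePreserving T ρ ρ) (hE : MeasurableSet E)
    (hF : MeasurableSet F) :
    (Measure.pi fun _ => ρ.prod ρ).real (hybridEvent T E F q)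
      = (Measure.pi fun _ => ρ).real E * (Measure.pi fun _ => ρ).real F := by
  have hTq : MeasurePreserving (fun (x : Fin q → X) s => T (x s)) (Measure.pi fun _ => ρ)
      (Measure.pi fun _ => ρ) := measurePreserving_pi _ _ fun _ => hT
  have hsplit : hybridEvent T E F q = MeasurableEquiv.arrowProdEquivProdArrow X X (Fin q) ⁻¹'
      (E ×ˢ ((fun x s => T (x s)) ⁻¹' F)) := by
    ext w
    simp only [hybridEvent, hybrid_zero, hybrid_self, Function.comp_def]
    rfl
  rw [hsplit, (measurePreserving_arrowProdEquivProdArrow X X (Fin q) _ _).measureReal_preimage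
    (hE.prod (hTq.measurable hF)).nullMeasurableSet, measureReal_prod_prod,
    hTq.measureReal_preimage hF.nullMeasurableSet]

theorem abs_measureReal_hybridEvent_sub_le (hT : MeasurePreserving T ρ ρ)
    (hE : MeasurableSet E) (hF : MeasurableSet F) {c : ℝ}
    (hc : ∀ (u : Fin q → X) (i : Fin q) (G : Set X), MeasurableSet G →
      |ρ.real ({z | update u i z ∈ E} ∩ T ⁻¹' G)
        - ρ.real {z | update u i z ∈ E} * ρ.real G| ≤ c)
    (i : Fin q) :
    |(Measure.pi fun _ => ρ.prod ρ).real (hybridEvent T E F i)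
      - (Measure.pi fun _ => ρ.prod ρ).real (hybridEvent T E F (i + 1))| ≤ c := by
  have hS := measurableSet_hybridEvent hT.measurable hE hF
  refine abs_measureReal_pi_sub_le_of_update _ (hS _) (hS _) i fun w => ?_
  set E' := {z | update (hybrid 0 w) i z ∈ E}
  set G := {z | update (T ∘ hybrid i w) i z ∈ F}
  have hG : MeasurableSet G := measurable_update _ hF
  have h1 : {a | update w i a ∈ hybridEvent T E F i} = (E' ∩ T ⁻¹' G) ×ˢ univ := by
    ext a
    simp [hybridEvent, E', G, hybrid_update_of_le (Nat.zero_le _), hybrid_update_of_le le_rfl,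
      Function.comp_update]
  have h2 : {a | update w i a ∈ hybridEvent T E F (i + 1)} = E' ×ˢ (T ⁻¹' G) := by
    ext a
    simp [hybridEvent, E', G, hybrid_update_of_le (Nat.zero_le _), hybrid_succ_update,
      Function.comp_update]
  rw [h1, h2, measureReal_prod_prod, measureReal_prod_prod, probReal_univ, mul_one,
    hT.measureReal_preimage hG.nullMeasurableSet]
  exact hc _ i G hG

theorem abs_measureReal_pi_inter_preimage_sub_le (hT : MeasurePreserving T ρ ρ)
    (hE : MeasurableSet E) (hF : MeasurableSet F) {c : ℝ}
    (hc : ∀ (u : Fin q → X) (i : Fin q) (G : Set X), MeasurableSet G →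
      |ρ.real ({z | update u i z ∈ E} ∩ T ⁻¹' G)
        - ρ.real {z | update u i z ∈ E} * ρ.real G| ≤ c) :
    |(Measure.pi fun _ => ρ).real (E ∩ (fun x s => T (x s)) ⁻¹' F)
      - (Measure.pi fun _ => ρ).real E * (Measure.pi fun _ => ρ).real F| ≤ q * c := by
  rw [← measureReal_hybridEvent_zero ρ hT.measurable hE hF,
    ← measureReal_hybridEvent_self ρ hT hE hF, ← Real.dist_eq]
  calc _ ≤ ∑ _i ∈ Finset.range q, c :=
        dist_le_range_sum_of_dist_le
          (f := fun j => (Measure.pi fun _ => ρ.prod ρ).real (hybridEvent T E F j)) q fun {i} hi =>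
        abs_measureReal_hybridEvent_sub_le ρ hT hE hF hc ⟨i, hi⟩
    _ = q * c := by simp

end ProductMixing

section Prefix

variable {A ι : Type*}

theorem shift_iterate_apply (r : ℕ) (x : ℕ → A) (j : ℕ) : shift^[r] x j = x (j + r) := by
  induction r generalizing x with
  | zero => rfl
  | succ r ih => rw [Function.iterate_succ_apply, ih]; rfl

theorem measurable_shift [MeasurableSpace A] : Measurable (shift : (ℕ → A) → ℕ → A) :=
  measurable_pi_lambda _ fun n => measurable_pi_apply (n + 1)

theorem preimage_image_eq_of_saturated {α β : Type*} (f : α → β) {S : Set α}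
    (h : ∀ ⦃x y⦄, f x = f y → x ∈ S → y ∈ S) : f ⁻¹' (f '' S) = S :=
  Subset.antisymm (fun _ ⟨_, hy, hxy⟩ => h hxy hy) (subset_preimage_image f S)

def DeterminedByPrefix (M : ℕ) (S : Set (ι → ℕ → A)) : Prop :=
  ∀ ⦃x y : ι → ℕ → A⦄, (∀ s, ∀ j < M, x s j = y s j) → x ∈ S → y ∈ S

variable [MeasurableSpace A] [Countable A] [MeasurableSingletonClass A] {M : ℕ}
  {S : Set (ι → ℕ → A)}

theorem DeterminedByPrefix.measurableSet [Finite ι] (h : DeterminedByPrefix M S) :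
    MeasurableSet S := by
  let r : (ι → ℕ → A) → ι → Fin M → A := fun x s j => x s j
  have hr : Measurable r := by fun_prop
  rw [← preimage_image_eq_of_saturated r fun x y hxy => h fun s j hj => congr_fun₂ hxy s ⟨j, hj⟩]
  exact hr MeasurableSet.of_discrete

theorem DeterminedByPrefix.measurableSet_comap_update [DecidableEq ι] (h : DeterminedByPrefix M S)
    (u : ι → ℕ → A) (i : ι) :
    MeasurableSet[MeasurableSpace.comap (fun (x : ℕ → A) (j : Fin M) => x j) MeasurableSpace.pi]
      {z | update u i z ∈ S} := by
  refine ⟨_, MeasurableSet.of_discrete, preimage_image_eq_of_saturated _ fun z z' hzz' => h ?_⟩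
  intro s j hj
  rcases eq_or_ne s i with rfl | hs
  · simpa using congr_fun hzz' ⟨j, hj⟩
  · simp [hs]

end Prefix

section Mixing

variable {A : Type*} [MeasurableSpace A] [Countable A] [MeasurableSingletonClass A]
  (P : Measure (ℕ → A)) [IsProbabilityMeasure P] {α : ℕ → ℝ}

theorem abs_measureReal_pi_inter_shift_preimage_sub_le (hinv : P.map shift = P)
    (hmix : AlphaMixing P α) {m n : ℕ} (hm : 1 ≤ m) (hn : 1 ≤ n) {q : ℕ}
    {E F : Set (Fin q → ℕ → A)} (hE : DeterminedByPrefix m E) (hF : MeasurableSet F) :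
    |(Measure.pi fun _ => P).real (E ∩ (fun x s => shift^[m + n] (x s)) ⁻¹' F)
      - (Measure.pi fun _ => P).real E * (Measure.pi fun _ => P).real F| ≤ q * α n :=
  abs_measureReal_pi_inter_preimage_sub_le P
    ((MeasurePreserving.mk measurable_shift hinv).iterate (m + n)) hE.measurableSet hF
    fun u i _ hG => hmix m n hm hn _ _ (hE.measurableSet_comap_update u i) hG

end Mixing

section Matching

variable {A : Type*} {q : ℕ} [NeZero q] {i u M : ℕ} {x y : Fin q → ℕ → A}

theorem lt_Ymatch_iff : (u : ℕ∞) < Ymatch i x ↔ ∀ m ≤ u, ∀ s, x s (i + m) = x 0 (i + m) := by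
  rw [← ENat.add_one_le_iff (ENat.natCast_ne_top u), Ymatch, le_sInf_iff, forall_mem_image]
  simp only [mem_ofPred_eq, forall_exists_index]
  norm_cast
  refine ⟨fun h m hm s => ?_, fun h m s hs => ?_⟩
  · by_contra hne
    exact absurd (h s hne) (by omega)
  · by_contra hlt
    exact hs (h m (by omega) s)

theorem lt_Ymatch_congr (hxy : ∀ s, ∀ j < M, x s j = y s j) (hM : i + u < M) :
    (u : ℕ∞) < Ymatch i x ↔ (u : ℕ∞) < Ymatch i y := by
  simp only [lt_Ymatch_iff]
  refine forall₂_congr fun m hm => forall_congr' fun s => ?_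
  rw [hxy s _ (by omega), hxy 0 _ (by omega)]

theorem Ymatch_shift_iterate (t : ℕ) (x : Fin q → ℕ → A) :
    Ymatch i (fun s => shift^[t] (x s)) = Ymatch (i + t) x := by
  simp only [Ymatch, shift_iterate_apply, Nat.add_right_comm i]

theorem determinedByPrefix_Aev : DeterminedByPrefix (u + 2) (Aev (A := A) q u) := by
  intro x y hxy
  simp only [Aev, mem_ofPred_eq, ← not_lt, lt_Ymatch_congr hxy (by omega : 0 + u < u + 2),
    lt_Ymatch_congr hxy (by omega : 1 + u < u + 2), imp_self]

theorem mem_Bev {t l : ℕ} : x ∈ Bev q u t l ↔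
    ∀ k < l, ¬((u : ℕ∞) < Ymatch (k + t) x ∧ Ymatch (k + t + 1) x ≤ u) := by
  simp only [Bev, mem_iInter, Finset.mem_Ico, mem_ofPred_eq]
  refine ⟨fun h k hk => h (k + t) ⟨by omega, by omega⟩, fun h i ⟨hti, hil⟩ => ?_⟩
  simpa only [Nat.sub_add_cancel hti] using h (i - t) (by omega)

theorem determinedByPrefix_Bev {l : ℕ} : DeterminedByPrefix (l + u + 1) (Bev (A := A) q u 0 l) := by
  intro x y hxy
  simp only [mem_Bev, add_zero, ← not_lt]
  intro h k hk
  rw [← lt_Ymatch_congr hxy (by omega : k + u < l + u + 1),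
    ← lt_Ymatch_congr hxy (by omega : k + 1 + u < l + u + 1)]
  exact h k hk

theorem Bev_eq_preimage_shift_iterate {t l : ℕ} :
    Bev (A := A) q u t l = (fun x s => shift^[t] (x s)) ⁻¹' Bev q u 0 l := by
  ext x
  simp only [mem_preimage, mem_Bev, Ymatch_shift_iterate, add_zero, Nat.add_right_comm _ 1 t]

end Matching

theorem abs_measureReal_inter_sub_mul_le {Ω : Type*} [MeasurableSpace Ω] (μ : Measure Ω)
    [IsProbabilityMeasure μ] (E B B' : Set Ω) :
    |μ.real (E ∩ B) - μ.real E * μ.real B'| ≤ μ.real E := by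
  have hEB : μ.real (E ∩ B) ≤ μ.real E := measureReal_mono inter_subset_left
  have hB' : μ.real B' ≤ 1 := measureReal_le_one
  have hE : 0 ≤ μ.real E := measureReal_nonneg
  rw [abs_sub_le_iff]
  constructor <;>
    nlinarith [measureReal_nonneg (μ := μ) (s := E ∩ B), measureReal_nonneg (μ := μ) (s := B')]

section Events

variable {A : Type*} [MeasurableSpace A] {q : ℕ} [NeZero q]

theorem measureReal_Aev_le (μ : Measure (Fin q → ℕ → A)) [IsProbabilityMeasure μ] {τ C : ℝ}
    (hC : 0 ≤ C)
    (htail : ∀ u : ℕ, 1 ≤ u → μ.real {x | (u : ℕ∞) < Ymatch 0 x} ≤ C * Real.exp (-τ * u))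
    (u : ℕ) : μ.real (Aev q u) ≤ (C + 1) * Real.exp (-τ * u) := by
  rcases Nat.eq_zero_or_pos u with rfl | hu
  · simp only [CharP.cast_eq_zero, mul_zero, Real.exp_zero, mul_one]
    linarith [measureReal_le_one (μ := μ) (s := Aev q 0)]
  · calc μ.real (Aev q u) ≤ μ.real {x | (u : ℕ∞) < Ymatch 0 x} :=
          measureReal_mono fun x hx => hx.1
      _ ≤ C * Real.exp (-τ * u) := htail u hu
      _ ≤ (C + 1) * Real.exp (-τ * u) := by gcongr; linarith

variable [Countable A] [MeasurableSingletonClass A]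
  (P : Measure (ℕ → A)) [IsProbabilityMeasure P] {α : ℕ → ℝ}

theorem abs_measureReal_Aev_inter_Bev_sub_le (hinv : P.map shift = P) (hmix : AlphaMixing P α)
    {u n l : ℕ} (hn : 1 ≤ n) :
    |(Measure.pi fun _ => P).real (Aev q u ∩ Bev q u (u + 2 + n) l)
      - (Measure.pi fun _ => P).real (Aev q u) * (Measure.pi fun _ => P).real (Bev q u 0 l)|
      ≤ q * α n := by
  rw [Bev_eq_preimage_shift_iterate]
  exact abs_measureReal_pi_inter_shift_preimage_sub_le P hinv hmix (by omega) hn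
    determinedByPrefix_Aev determinedByPrefix_Bev.measurableSet

end Events

theorem D1_mixing_bound_general
    {A : Type*} [Fintype A] [MeasurableSpace A] [MeasurableSingletonClass A]
    (P : Measure (ℕ → A)) [IsProbabilityMeasure P]
    (hinv : P.map shift = P)
    (α : ℕ → ℝ) (hmix : AlphaMixing P α)
    (q : ℕ) [NeZero q] (Hq : ℝ) (hHq_pos : 0 < Hq)
    (β κ : ℝ) (hβ : 0 < β) (hκ : 0 < κ)
    (hα : ∀ n : ℕ, 1 ≤ n → α n ≤ β * Real.exp (-κ * n))
    (C₂ : ℝ) (hC₂ : 0 < C₂)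
    (hC₂bound : ∀ u : ℕ, 1 ≤ u →
      ((Measure.pi fun _ : Fin q => P)
          {x : Fin q → ℕ → A | ((u : ℕ) : ℕ∞) < Ymatch 0 x}).toReal
        ≤ C₂ * Real.exp (-(((q : ℝ) - 1) * Hq) * u))
    (s : ℝ) :
    ∃ C₅ : ℝ, 0 < C₅ ∧ ∀ n t l : ℕ, 1 ≤ n → 1 ≤ t → 1 ≤ l →
      |((Measure.pi fun _ : Fin q => P)
          (Aev q ⌊(Real.log n + s) / (((q : ℝ) - 1) * Hq)⌋₊ ∩
            Bev q ⌊(Real.log n + s) / (((q : ℝ) - 1) * Hq)⌋₊ t l)).toReal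
        - ((Measure.pi fun _ : Fin q => P)
            (Aev q ⌊(Real.log n + s) / (((q : ℝ) - 1) * Hq)⌋₊)).toReal *
          ((Measure.pi fun _ : Fin q => P)
            (Bev q ⌊(Real.log n + s) / (((q : ℝ) - 1) * Hq)⌋₊ 0 l)).toReal|
      ≤ (q : ℝ) * β * Real.exp (-κ * ((t : ℝ) / 2 - 1))
        + C₅ * Real.exp (-((t : ℝ) / 2 - 1) * (((q : ℝ) - 1) * Hq)) := by
  set τ := ((q : ℝ) - 1) * Hq
  have hτ : 0 ≤ τ := mul_nonneg (by simpa using NeZero.one_le (n := q)) hHq_pos.le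
  refine ⟨C₂ + 1, by positivity, fun n t l _ _ _ => ?_⟩
  set u := ⌊(Real.log n + s) / τ⌋₊
  by_cases hgap : u + 3 ≤ t ∧ 2 * u + 2 ≤ t
  · obtain ⟨k, rfl⟩ : ∃ k, t = u + 2 + k := ⟨t - (u + 2), by omega⟩
    have hk : ((u + 2 + k : ℕ) : ℝ) / 2 - 1 ≤ k := by
      have : (2 * u + 2 : ℝ) ≤ u + 2 + k := by exact_mod_cast hgap.2
      push_cast; linarith
    calc _ ≤ q * α k := abs_measureReal_Aev_inter_Bev_sub_le P hinv hmix (by omega)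
      _ ≤ q * (β * Real.exp (-κ * k)) := by gcongr; exact hα k (by omega)
      _ ≤ q * β * Real.exp (-κ * (((u + 2 + k : ℕ) : ℝ) / 2 - 1)) := by
        rw [mul_assoc]
        gcongr q * (β * ?_)
        exact Real.exp_le_exp.mpr (by nlinarith)
      _ ≤ _ := le_add_of_nonneg_right (by positivity)
  · have htu : (t : ℝ) / 2 - 1 ≤ u := by
      have : (t : ℝ) ≤ 2 * u + 2 := by exact_mod_cast (by omega : t ≤ 2 * u + 2)
      linarith
    calc _ ≤ (Measure.pi fun _ : Fin q => P).real (Aev q u) :=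
          abs_measureReal_inter_sub_mul_le _ _ _ _
      _ ≤ (C₂ + 1) * Real.exp (-τ * u) := measureReal_Aev_le _ hC₂.le hC₂bound u
      _ ≤ (C₂ + 1) * Real.exp (-((t : ℝ) / 2 - 1) * τ) := by
        gcongr (C₂ + 1) * ?_
        exact Real.exp_le_exp.mpr (by nlinarith)
      _ ≤ _ := le_add_of_nonneg_left (by positivity)

/-- the Д₁(uₙ)-type mixing bound for the matching process under exponential
α-mixing. -/
theorem D1_mixing_bound
    {A : Type*} [Fintype A] [Nonempty A] [MeasurableSpace A] [MeasurableSingletonClass A]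
    (P : Measure (ℕ → A)) [IsProbabilityMeasure P]
    (hinv : P.map shift = P)
    (α : ℕ → ℝ) (hmix : AlphaMixing P α)
    (q : ℕ) [NeZero q] (hq : 2 ≤ q) (Hq : ℝ) (hHq_pos : 0 < Hq)
    (hHq : Tendsto (fun k : ℕ =>
        Real.log (∑ w : Fin k → A, (P (cyl w)).toReal ^ q) / ((1 - (q : ℝ)) * (k : ℝ)))
      atTop (𝓝 Hq))
    (β κ : ℝ) (hβ : 0 < β) (hκ : 0 < κ)
    (hα : ∀ n : ℕ, 1 ≤ n → α n ≤ β * Real.exp (-κ * n))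
    (C₂ : ℝ) (hC₂ : 0 < C₂)
    (hC₂bound : ∀ u : ℕ, 1 ≤ u →
      ((Measure.pi fun _ : Fin q => P)
          {x : Fin q → ℕ → A | ((u : ℕ) : ℕ∞) < Ymatch 0 x}).toReal
        ≤ C₂ * Real.exp (-(((q : ℝ) - 1) * Hq) * u))
    (s : ℝ) :
    ∃ C₅ : ℝ, 0 < C₅ ∧ ∀ n t l : ℕ, 1 ≤ n → 1 ≤ t → 1 ≤ l →
      |((Measure.pi fun _ : Fin q => P)
          (Aev q ⌊(Real.log n + s) / (((q : ℝ) - 1) * Hq)⌋₊ ∩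
            Bev q ⌊(Real.log n + s) / (((q : ℝ) - 1) * Hq)⌋₊ t l)).toReal
        - ((Measure.pi fun _ : Fin q => P)
            (Aev q ⌊(Real.log n + s) / (((q : ℝ) - 1) * Hq)⌋₊)).toReal *
          ((Measure.pi fun _ : Fin q => P)
            (Bev q ⌊(Real.log n + s) / (((q : ℝ) - 1) * Hq)⌋₊ 0 l)).toReal|
      ≤ (q : ℝ) * β * Real.exp (-κ * ((t : ℝ) / 2 - 1))
        + C₅ * Real.exp (-((t : ℝ) / 2 - 1) * (((q : ℝ) - 1) * Hq)) :=
  D1_mixing_bound_general P hinv α hmix q Hq hHq_pos β κ hβ hκ hα C₂ hC₂ hC₂bound s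

end Stmt16
end
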